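/- Let H be a Hopf algebra and A a bialgebra such that (A, μ) is a right H-Hopf module algebra and (A, Δ) is a right H-Hopf module coalgebra (with the same underlying right H-Hopf module structure). Then (A, P_R, P_R) with P_R(a) = a_(0)·S(a_(1)) is a Rota-Baxter bialgebra of weight (−1, −1): P_R(x)P_R(y) = P_R(xP_R(y)) + P_R(P_R(x)y) − P_R(xy) and (P_R⊗P_R)Δ = (id⊗P_R)ΔP_R + (P_R⊗id)ΔP_R − ΔP_R. -/

import Mathlib

open TensorProduct LinearMap

/-- A right Hopf module over a Hopf algebra `H`: `act` is a right `H`-module structure,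
`ρ` is a right `H`-comodule structure, and the compatibility `ρ (m · h) = ρ(m) Δ(h)` holds. -/
def IsRightHopfModule (K : Type*) [Field K] (H : Type*) [Ring H] [HopfAlgebra K H]
    {M : Type*} [AddCommGroup M] [Module K M]
    (act : M ⊗[K] H →ₗ[K] M) (ρ : M →ₗ[K] M ⊗[K] H) : Prop :=
  -- right module axioms
  (∀ (m : M) (h h' : H), act (act (m ⊗ₜ[K] h) ⊗ₜ[K] h') = act (m ⊗ₜ[K] (h * h'))) ∧
  (∀ m : M, act (m ⊗ₜ[K] (1 : H)) = m) ∧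
  -- right comodule axioms: coassociativity and counitality
  (rTensor H ρ ∘ₗ ρ =
    (TensorProduct.assoc K M H H).symm.toLinearMap ∘ₗ lTensor M (Coalgebra.comul (R := K)) ∘ₗ ρ) ∧
  (∀ m : M, (TensorProduct.rid K M) ((lTensor M (Coalgebra.counit (R := K))) (ρ m)) = m) ∧
  -- Hopf module compatibility: ρ(m·h) = m₍₀₎·h₁ ⊗ m₍₁₎h₂
  (ρ ∘ₗ act =
    TensorProduct.map act (LinearMap.mul' K H) ∘ₗ
      (tensorTensorTensorComm K M H H H).toLinearMap ∘ₗ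
        TensorProduct.map ρ (Coalgebra.comul (R := K)))



/-- A right `H`-Hopf module coalgebra: a right Hopf module `C` with a coassociative
comultiplication `D` satisfying `c₍₀₎₁ ⊗ c₍₀₎₂ ⊗ c₍₁₎ = c₁ ⊗ c₂₍₀₎ ⊗ c₂₍₁₎` and
`Δ(c·h) = c₁·h₁ ⊗ c₂·h₂`. -/
def IsRightHopfModuleCoalgebra (K : Type*) [Field K] (H : Type*) [Ring H] [HopfAlgebra K H]
    {C : Type*} [AddCommGroup C] [Module K C]
    (act : C ⊗[K] H →ₗ[K] C) (ρ : C →ₗ[K] C ⊗[K] H) (D : C →ₗ[K] C ⊗[K] C) : Prop :=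
  IsRightHopfModule K H act ρ ∧
  -- coassociativity of D
  (rTensor C D ∘ₗ D = (TensorProduct.assoc K C C C).symm.toLinearMap ∘ₗ lTensor C D ∘ₗ D) ∧
  -- c₍₀₎₁ ⊗ c₍₀₎₂ ⊗ c₍₁₎ = c₁ ⊗ c₂₍₀₎ ⊗ c₂₍₁₎
  (rTensor H D ∘ₗ ρ = (TensorProduct.assoc K C C H).symm.toLinearMap ∘ₗ lTensor C ρ ∘ₗ D) ∧
  -- Δ(c·h) = c₁·h₁ ⊗ c₂·h₂
  (D ∘ₗ act =
    TensorProduct.map act act ∘ₗ (tensorTensorTensorComm K C C H H).toLinearMap ∘ₗ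
      TensorProduct.map D (Coalgebra.comul (R := K)))

/-- `(C, Q)` is a Rota–Baxter coalgebra of weight `γ`:
`Q(c₁)⊗Q(c₂) = Q(c)₁⊗Q(Q(c)₂) + Q(Q(c)₁)⊗Q(c)₂ + γ Q(c)₁⊗Q(c)₂`. -/
def IsRotaBaxterCoalgebra (K : Type*) [Field K] {C : Type*} [AddCommGroup C] [Module K C]
    (D : C →ₗ[K] C ⊗[K] C) (Q : C →ₗ[K] C) (γ : K) : Prop :=
  TensorProduct.map Q Q ∘ₗ D =
    lTensor C Q ∘ₗ D ∘ₗ Q + rTensor C Q ∘ₗ D ∘ₗ Q + γ • (D ∘ₗ Q)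

/-- A right `H`-Hopf module algebra: a right Hopf module `M` with an associative
multiplication `mul` satisfying `(mm')·h = m(m'·h)` and `ρ(mm') = m₍₀₎m'₍₀₎ ⊗ m₍₁₎m'₍₁₎`. -/
def IsRightHopfModuleAlgebra (K : Type*) [Field K] (H : Type*) [Ring H] [HopfAlgebra K H]
    {M : Type*} [AddCommGroup M] [Module K M]
    (act : M ⊗[K] H →ₗ[K] M) (ρ : M →ₗ[K] M ⊗[K] H) (mul : M ⊗[K] M →ₗ[K] M) : Prop :=
  IsRightHopfModule K H act ρ ∧
  -- associativity
  (∀ a b c : M, mul (mul (a ⊗ₜ[K] b) ⊗ₜ[K] c) = mul (a ⊗ₜ[K] mul (b ⊗ₜ[K] c))) ∧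
  -- (mm')·h = m(m'·h)
  (act ∘ₗ rTensor H mul = mul ∘ₗ lTensor M act ∘ₗ (TensorProduct.assoc K M M H).toLinearMap) ∧
  -- ρ(mm') = m₍₀₎m'₍₀₎ ⊗ m₍₁₎m'₍₁₎
  (ρ ∘ₗ mul = TensorProduct.map mul (LinearMap.mul' K H) ∘ₗ
    (tensorTensorTensorComm K M H M H).toLinearMap ∘ₗ TensorProduct.map ρ ρ)


/-
`P(m) = m₍₀₎ · S(m₍₁₎)` is the projection of a right Hopf module onto its coinvariants:
`P(m · h) = ε(h) P(m)`, and `ρ(P m) = P m ⊗ 1` because `(1 ⊗ k₁) Δ(S k₂) = S k ⊗ 1` in any Hopf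
algebra. On the algebra side this gives `P(P(x) y) = P(x) P(y)` and `P(x P(y)) = P(x y)`. On
the coalgebra side, coinvariance of `P c` makes the right tensor legs of `Δ(P c)` coinvariant,
hence fixed by `P`, so `(id ⊗ P) Δ P = Δ P`, while `P(m · h) = ε(h) P(m)` gives `(P ⊗ id) Δ P = (P ⊗ P) Δ`.
Each Rota–Baxter identity of weight `-1` is the sum of the corresponding two identities.
-/

open Coalgebra HopfAlgebra WithConv

namespace HopfAlgebra
variable {R H : Type*} [CommSemiring R] [Semiring H] [HopfAlgebra R H]

open Algebra.TensorProduct in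
lemma includeRight_convMul_comul_comp_antipode :
    toConv (includeRight : H →ₐ[R] H ⊗[R] H).toLinearMap * toConv (comul ∘ₗ antipode R) =
      toConv ((includeLeft : H →ₐ[R] H ⊗[R] H).toLinearMap ∘ₗ antipode R) := by
  have comul_convMul : toConv (comul (R := R) (A := H)) * toConv (comul ∘ₗ antipode R) = 1 := by
    have := algHom_comp_convMul_distrib (Bialgebra.comulAlgHom R H) (toConv .id)
      (toConv (antipode R))
    rw [id_mul_antipode] at this
    simp only [Bialgebra.toLinearMap_comulAlgHom, LinearMap.comp_id] at this
    apply ofConv_injective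
    rw [← this]
    ext; simp
  have convMul_comul : toConv ((includeLeft : H →ₐ[R] H ⊗[R] H).toLinearMap ∘ₗ antipode R) *
      toConv (comul (R := R) (A := H)) = toConv (includeRight : H →ₐ[R] H ⊗[R] H).toLinearMap := by
    have mul'_map : mul' R (H ⊗[R] H) ∘ₗ map (includeLeft.toLinearMap ∘ₗ antipode R) .id =
        rTensor H (mul' R H ∘ₗ rTensor H (antipode R)) ∘ₗ (TensorProduct.assoc R H H H).symm := by
      ext; simp
    ext k
    calc mul' R (H ⊗[R] H) (map (includeLeft.toLinearMap ∘ₗ antipode R) comul (comul k))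
        = rTensor H (mul' R H ∘ₗ rTensor H (antipode R))
            ((TensorProduct.assoc R H H H).symm (lTensor H comul (comul k))) := by
          simpa [map_comp_lTensor] using congr($mul'_map (lTensor H comul (comul k)))
      _ = 1 ⊗ₜ k := by
          rw [coassoc_symm_apply, ← LinearMap.comp_apply (rTensor H _), ← rTensor_comp,
            LinearMap.comp_assoc, mul_antipode_rTensor_comul, rTensor_comp_apply,
            rTensor_counit_comul]
          simp
  rw [← convMul_comul, mul_assoc, comul_convMul, mul_one]

lemma mul'_map_includeRight_comul_comp_antipode_comul (k : H) :
    mul' R (H ⊗[R] H) (map (Algebra.TensorProduct.includeRight : H →ₐ[R] H ⊗[R] H).toLinearMap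
      (comul ∘ₗ antipode R) (comul k)) = antipode R k ⊗ₜ 1 :=
  congr($includeRight_convMul_comul_comp_antipode k)

end HopfAlgebra

section
variable {R H M : Type*} [CommSemiring R] [Semiring H] [HopfAlgebra R H]
  [AddCommMonoid M] [Module R M]

/-- The operator `P_R`. -/
noncomputable def hopfModuleProj (act : M ⊗[R] H →ₗ[R] M) (ρ : M →ₗ[R] M ⊗[R] H) : M →ₗ[R] M :=
  act ∘ₗ lTensor M (antipode R) ∘ₗ ρ

lemma hopfModuleProj_apply (act : M ⊗[R] H →ₗ[R] M) (ρ : M →ₗ[R] M ⊗[R] H) (m : M) :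
    hopfModuleProj act ρ m = act (lTensor M (antipode R) (ρ m)) :=
  rfl

end

section
variable {K H A : Type*} [Field K] [Ring H] [HopfAlgebra K H] [AddCommGroup A] [Module K A]
  {act : A ⊗[K] H →ₗ[K] A} {ρ : A →ₗ[K] A ⊗[K] H}

namespace IsRightHopfModule
variable (hM : IsRightHopfModule K H act ρ)
include hM

lemma act_act (m : A) (h h' : H) : act (act (m ⊗ₜ h) ⊗ₜ h') = act (m ⊗ₜ (h * h')) := hM.1 m h h'

lemma act_one (m : A) : act (m ⊗ₜ 1) = m := hM.2.1 m

lemma coassoc_apply (m : A) :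
    rTensor H ρ (ρ m) = (TensorProduct.assoc K A H H).symm (lTensor A (comul (R := K)) (ρ m)) :=
  congr($(hM.2.2.1) m)

lemma rid_lTensor_counit (m : A) :
    TensorProduct.rid K A (lTensor A (counit (R := K)) (ρ m)) = m :=
  hM.2.2.2.1 m

lemma coaction_act (m : A) (h : H) :
    ρ (act (m ⊗ₜ h)) =
      map act (mul' K H) (tensorTensorTensorComm K A H H H (ρ m ⊗ₜ comul (R := K) h)) :=
  congr($(hM.2.2.2.2) (m ⊗ₜ h))

lemma hopfModuleProj_act (m : A) (h : H) :
    hopfModuleProj act ρ (act (m ⊗ₜ h)) = counit (R := K) h • hopfModuleProj act ρ m := by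
  rw [hopfModuleProj_apply, hopfModuleProj_apply, hM.coaction_act]
  induction ρ m using TensorProduct.induction_on with
  | zero => simp
  | add t t' ht ht' => simp only [add_tmul, map_add, ht, ht', smul_add]
  | tmul a k =>
    have key : ∀ s : H ⊗[K] H, act (lTensor A (antipode K) (map act (mul' K H)
        (tensorTensorTensorComm K A H H H ((a ⊗ₜ k) ⊗ₜ s)))) =
          act (a ⊗ₜ (mul' K H (lTensor H (antipode K) s) * antipode K k)) := by
      intro s
      induction s using TensorProduct.induction_on with
      | zero => simp
      | add s s' hs hs' => simp only [tmul_add, map_add, hs, hs', add_mul]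
      | tmul x y => simp [antipode_mul_antidistrib, hM.act_act, mul_assoc]
    rw [key, mul_antipode_lTensor_comul_apply, ← Algebra.smul_def]
    simp

lemma coaction_hopfModuleProj (m : A) :
    ρ (hopfModuleProj act ρ m) = hopfModuleProj act ρ m ⊗ₜ 1 := by
  set Ψ := map act (mul' K H) ∘ₗ (tensorTensorTensorComm K A H H H).toLinearMap ∘ₗ
    lTensor (A ⊗[K] H) (comul ∘ₗ antipode K)
  have coaction_act_antipode : ρ ∘ₗ act ∘ₗ lTensor A (antipode K) = Ψ ∘ₗ rTensor H ρ := by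
    ext a k
    simp [Ψ, hM.coaction_act]
  have hΨ (a : A) (s : H ⊗[K] H) : Ψ ((TensorProduct.assoc K A H H).symm (a ⊗ₜ s)) =
      map (act ∘ₗ TensorProduct.mk K A H a) .id
        (mul' K (H ⊗[K] H) (map (Algebra.TensorProduct.includeRight : H →ₐ[K] H ⊗[K] H).toLinearMap
          (comul ∘ₗ antipode K) s)) := by
    induction s using TensorProduct.induction_on with
    | zero => simp
    | add s s' hs hs' => simp only [tmul_add, map_add, hs, hs']
    | tmul x y =>
      simp only [Ψ, LinearMap.comp_apply, TensorProduct.assoc_symm_tmul, lTensor_tmul,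
        TensorProduct.map_tmul, mul'_apply]
      generalize comul (R := K) (antipode K y) = z
      induction z using TensorProduct.induction_on with
      | zero => simp
      | add z z' hz hz' => simp only [tmul_add, map_add, mul_add, hz, hz']
      | tmul p q => simp
  calc ρ (hopfModuleProj act ρ m) = Ψ (rTensor H ρ (ρ m)) := congr($coaction_act_antipode (ρ m))
    _ = Ψ ((TensorProduct.assoc K A H H).symm (lTensor A (comul (R := K)) (ρ m))) := by
      rw [hM.coassoc_apply]
    _ = hopfModuleProj act ρ m ⊗ₜ 1 := by
      rw [hopfModuleProj_apply]
      induction ρ m using TensorProduct.induction_on with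
      | zero => simp
      | add t t' ht ht' => simp only [add_tmul, map_add, ht, ht']
      | tmul a k =>
        rw [lTensor_tmul, hΨ, mul'_map_includeRight_comul_comp_antipode_comul]
        simp

end IsRightHopfModule

namespace IsRightHopfModuleAlgebra
variable {mul : A ⊗[K] A →ₗ[K] A} (hA : IsRightHopfModuleAlgebra K H act ρ mul)
include hA

lemma act_mul (a b : A) (h : H) : act (mul (a ⊗ₜ b) ⊗ₜ h) = mul (a ⊗ₜ act (b ⊗ₜ h)) :=
  congr($(hA.2.2.1) ((a ⊗ₜ b) ⊗ₜ h))

lemma coaction_mul (a b : A) :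
    ρ (mul (a ⊗ₜ b)) = map mul (mul' K H) (tensorTensorTensorComm K A H A H (ρ a ⊗ₜ ρ b)) :=
  congr($(hA.2.2.2) (a ⊗ₜ b))

lemma hopfModuleProj_mul_of_coaction_eq {n : A} (hn : ρ n = n ⊗ₜ 1) (y : A) :
    hopfModuleProj act ρ (mul (n ⊗ₜ y)) = mul (n ⊗ₜ hopfModuleProj act ρ y) := by
  rw [hopfModuleProj_apply, hopfModuleProj_apply, hA.coaction_mul, hn]
  induction ρ y using TensorProduct.induction_on with
  | zero => simp
  | add t t' ht ht' => simp only [tmul_add, map_add, ht, ht']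
  | tmul b k => simp [hA.act_mul]

lemma hopfModuleProj_mul_hopfModuleProj (x y : A) :
    hopfModuleProj act ρ (mul (x ⊗ₜ hopfModuleProj act ρ y)) =
      hopfModuleProj act ρ (mul (x ⊗ₜ y)) := by
  conv_rhs => rw [← hA.1.rid_lTensor_counit y]
  rw [hopfModuleProj_apply act ρ y]
  induction ρ y using TensorProduct.induction_on with
  | zero => simp
  | add t t' ht ht' => simp only [tmul_add, map_add, ht, ht']
  | tmul b k => simp [← hA.act_mul, hA.1.hopfModuleProj_act]

lemma rotaBaxter_hopfModuleProj (x y : A) :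
    mul (hopfModuleProj act ρ x ⊗ₜ hopfModuleProj act ρ y) =
      hopfModuleProj act ρ (mul (x ⊗ₜ hopfModuleProj act ρ y)) +
        hopfModuleProj act ρ (mul (hopfModuleProj act ρ x ⊗ₜ y)) -
          hopfModuleProj act ρ (mul (x ⊗ₜ y)) := by
  rw [hA.hopfModuleProj_mul_hopfModuleProj, hA.hopfModuleProj_mul_of_coaction_eq
    (hA.1.coaction_hopfModuleProj x)]
  abel

end IsRightHopfModuleAlgebra

namespace IsRightHopfModuleCoalgebra
variable {D : A →ₗ[K] A ⊗[K] A} (hC : IsRightHopfModuleCoalgebra K H act ρ D)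
include hC

lemma rTensor_comul_coaction (c : A) :
    rTensor H D (ρ c) = (TensorProduct.assoc K A A H).symm (lTensor A ρ (D c)) :=
  congr($(hC.2.2.1) c)

lemma comul_act (a : A) (h : H) :
    D (act (a ⊗ₜ h)) = map act act (tensorTensorTensorComm K A A H H (D a ⊗ₜ comul (R := K) h)) :=
  congr($(hC.2.2.2) (a ⊗ₜ h))

lemma lTensor_hopfModuleProj_comul_of_coaction_eq {n : A} (hn : ρ n = n ⊗ₜ 1) :
    lTensor A (hopfModuleProj act ρ) (D n) = D n := by
  have lTensor_coaction : lTensor A ρ (D n) = TensorProduct.assoc K A A H (D n ⊗ₜ 1) := by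
    rw [← rTensor_tmul, ← hn, hC.rTensor_comul_coaction, LinearEquiv.apply_symm_apply]
  rw [hopfModuleProj, lTensor_comp_apply, lTensor_comp_apply, lTensor_coaction]
  induction D n using TensorProduct.induction_on with
  | zero => simp
  | add t t' ht ht' => simp only [add_tmul, map_add, ht, ht']
  | tmul x y => simp [hC.1.act_one]

lemma rTensor_hopfModuleProj_comul_act (a : A) (h : H) :
    rTensor A (hopfModuleProj act ρ) (D (act (a ⊗ₜ h))) =
      map (hopfModuleProj act ρ) (act ∘ₗ (TensorProduct.mk K A H).flip h) (D a) := by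
  rw [hC.comul_act]
  induction D a using TensorProduct.induction_on with
  | zero => simp
  | add t t' ht ht' => simp only [add_tmul, map_add, ht, ht']
  | tmul x y =>
    have key : ∀ s : H ⊗[K] H, rTensor A (hopfModuleProj act ρ)
        (map act act (tensorTensorTensorComm K A A H H ((x ⊗ₜ y) ⊗ₜ s))) =
          hopfModuleProj act ρ x ⊗ₜ act (y ⊗ₜ TensorProduct.lid K H (rTensor H counit s)) := by
      intro s
      induction s using TensorProduct.induction_on with
      | zero => simp
      | add s s' hs hs' => simp only [tmul_add, map_add, hs, hs']
      | tmul p q => simp [hC.1.hopfModuleProj_act, smul_tmul]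
    simp [key]

lemma rTensor_hopfModuleProj_comul_hopfModuleProj (c : A) :
    rTensor A (hopfModuleProj act ρ) (D (hopfModuleProj act ρ c)) =
      map (hopfModuleProj act ρ) (hopfModuleProj act ρ) (D c) := by
  have key : ∀ t : A ⊗[K] H,
      rTensor A (hopfModuleProj act ρ) (D (act (lTensor A (antipode K) t))) =
        map (hopfModuleProj act ρ) (act ∘ₗ lTensor A (antipode K))
          (TensorProduct.assoc K A A H (rTensor H D t)) := by
    intro t
    induction t using TensorProduct.induction_on with
    | zero => simp
    | add t t' ht ht' => simp only [map_add, ht, ht']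
    | tmul a k =>
      rw [lTensor_tmul, hC.rTensor_hopfModuleProj_comul_act, rTensor_tmul]
      induction D a using TensorProduct.induction_on with
      | zero => simp
      | add u u' hu hu' => simp only [add_tmul, map_add, hu, hu']
      | tmul x y => simp
  rw [hopfModuleProj_apply act ρ c, key, hC.rTensor_comul_coaction,
    LinearEquiv.apply_symm_apply, ← LinearMap.comp_apply, map_comp_lTensor]
  rfl

lemma isRotaBaxterCoalgebra_hopfModuleProj :
    IsRotaBaxterCoalgebra K D (hopfModuleProj act ρ) (-1) := by
  ext c
  simp only [LinearMap.comp_apply, LinearMap.add_apply, LinearMap.smul_apply,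
    hC.lTensor_hopfModuleProj_comul_of_coaction_eq (hC.1.coaction_hopfModuleProj c),
    hC.rTensor_hopfModuleProj_comul_hopfModuleProj, neg_smul, one_smul]
  abel

end IsRightHopfModuleCoalgebra
end

theorem hopfModuleBialgebra_rotaBaxterBialgebra_general
    (K : Type*) [Field K] (H : Type*) [Ring H] [HopfAlgebra K H]
    (A : Type*) [AddCommGroup A] [Module K A]
    (act : A ⊗[K] H →ₗ[K] A) (ρ : A →ₗ[K] A ⊗[K] H)
    (mul : A ⊗[K] A →ₗ[K] A) (D : A →ₗ[K] A ⊗[K] A)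
    -- (A, μ) is a right H-Hopf module algebra
    (halg : IsRightHopfModuleAlgebra K H act ρ mul)
    -- (A, Δ) is a right H-Hopf module coalgebra
    (hcoalg : IsRightHopfModuleCoalgebra K H act ρ D)
    -- P_R(a) = a₍₀₎ · S(a₍₁₎)
    (P : A →ₗ[K] A)
    (hP : P = act ∘ₗ lTensor A (HopfAlgebra.antipode (R := K)) ∘ₗ ρ) :
    (∀ x y : A, mul (P x ⊗ₜ[K] P y) =
      P (mul (x ⊗ₜ[K] P y)) + P (mul (P x ⊗ₜ[K] y)) - P (mul (x ⊗ₜ[K] y))) ∧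
    IsRotaBaxterCoalgebra K D P (-1) := by
  subst hP
  exact ⟨halg.rotaBaxter_hopfModuleProj, hcoalg.isRotaBaxterCoalgebra_hopfModuleProj⟩

theorem hopfModuleBialgebra_rotaBaxterBialgebra
    (K : Type*) [Field K] (H : Type*) [Ring H] [HopfAlgebra K H]
    (A : Type*) [AddCommGroup A] [Module K A]
    (act : A ⊗[K] H →ₗ[K] A) (ρ : A →ₗ[K] A ⊗[K] H)
    (mul : A ⊗[K] A →ₗ[K] A) (D : A →ₗ[K] A ⊗[K] A)
    -- A is a bialgebra: Δ(ab) = Δ(a)Δ(b)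
    (hbialg : D ∘ₗ mul = TensorProduct.map mul mul ∘ₗ
      (tensorTensorTensorComm K A A A A).toLinearMap ∘ₗ TensorProduct.map D D)
    -- (A, μ) is a right H-Hopf module algebra
    (halg : IsRightHopfModuleAlgebra K H act ρ mul)
    -- (A, Δ) is a right H-Hopf module coalgebra
    (hcoalg : IsRightHopfModuleCoalgebra K H act ρ D)
    -- P_R(a) = a₍₀₎ · S(a₍₁₎)
    (P : A →ₗ[K] A)
    (hP : P = act ∘ₗ lTensor A (HopfAlgebra.antipode (R := K)) ∘ₗ ρ) :
    (∀ x y : A, mul (P x ⊗ₜ[K] P y) =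
      P (mul (x ⊗ₜ[K] P y)) + P (mul (P x ⊗ₜ[K] y)) - P (mul (x ⊗ₜ[K] y))) ∧
    IsRotaBaxterCoalgebra K D P (-1) :=
  hopfModuleBialgebra_rotaBaxterBialgebra_general K H A act ρ mul D halg hcoalg P hP
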